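/- arXiv:0803.0988 — 2 statements merged into one kernel-verified Lean document; each statement's English description precedes it below -/
import Mathlib

section
/- Let A be an n×m real matrix with m ≥ 1, b ∈ ℝⁿ, c ∈ ℝ^m, z ∈ ℝ, and let Ã = [A, −b·1_mᵀ] have full row rank. Suppose (y, s, s_gap) satisfies Aᵀy + s = c, bᵀy − z = s_gap, with all entries of s positive, s_gap > 0, and η_{Ã}((s, s_gap·1_m)) ≤ 1/10. Let z⁺ = z + s_gap/(10√m). Suppose (ȳ, s̄, s̄_gap) is the analytic center of Ω^D_{b,z} and (ȳ⁺, s̄⁺, s̄⁺_gap) is the analytic center of Ω^D_{b,z⁺}. Then Σ_{j=1}^m log s̄⁺_j + m·log s̄⁺_gap ≤ Σ_{j=1}^m log s̄_j + m·log s̄_gap − (9/100)·√m. -/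
/-!
Write `t = (s, s_gap 1)` and `t̄ = (s̄, s̄_gap 1)`. Since `t̄ - t = Ãᵀ (y - ȳ)`, the relative change
`a = (t̄ - t) / t` lies in the range of `T⁻¹ Ãᵀ`, onto which `T⁻¹ Ãᵀ (Ã T⁻² Ãᵀ)⁻¹ Ã T⁻¹` projects;
hence `∑ aᵢ ≤ η ‖a‖`. The centering condition `Ã t̄⁻¹ = 0` makes `t̄ - t` orthogonal to `t̄⁻¹`,
and the two facts force `‖a‖ ≤ η / (1 - η) ≤ 1/9`, so `s̄_gap ≤ (10/9) s_gap`.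
By concavity of `log` at `s̄`, whose centering condition turns the linear term into
`m / s̄_gap · bᵀ (ȳ - ȳ⁺)`, the potential of any slack vector for the bound `z⁺` is at most that of
the centre minus `m (z⁺ - z) / s̄_gap = √m s_gap / (10 s̄_gap) ≥ (9/100) √m`.
-/

open Matrix

open Matrix

/-- Euclidean norm of a vector. -/
noncomputable def eucNorm {ι : Type*} [Fintype ι] (v : ι → ℝ) : ℝ :=
  Real.sqrt (v ⬝ᵥ v)

/-- The diagonal matrix `S⁻¹` with entries `1 / s i`. -/
noncomputable def diagInv {ι : Type*} [Fintype ι] [DecidableEq ι] (s : ι → ℝ) :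
    Matrix ι ι ℝ :=
  Matrix.diagonal fun i => (s i)⁻¹

/-- `x_A(s) = S⁻¹ (1 - S⁻¹ Aᵀ (A S⁻² Aᵀ)⁻¹ A S⁻¹ 1)`. -/
noncomputable def xA {n m : ℕ} (A : Matrix (Fin n) (Fin m) ℝ) (s : Fin m → ℝ) :
    Fin m → ℝ :=
  (diagInv s *ᵥ fun _ => 1) -
    ((diagInv s * diagInv s * Aᵀ * (A * diagInv s * diagInv s * Aᵀ)⁻¹ * A * diagInv s) *ᵥ
      fun _ => 1)

/-- `η_A(s) = ‖S⁻¹ Aᵀ (A S⁻² Aᵀ)⁻¹ A S⁻¹ 1‖`. -/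
noncomputable def etaA {κ ι : Type*} [Fintype κ] [Fintype ι] [DecidableEq κ] [DecidableEq ι]
    (B : Matrix κ ι ℝ) (t : ι → ℝ) : ℝ :=
  eucNorm ((diagInv t * Bᵀ * (B * diagInv t * diagInv t * Bᵀ)⁻¹ * B * diagInv t) *ᵥ
    fun _ => 1)

open Finset

lemma Real.log_le_log_add_sub_div {x y : ℝ} (hx : 0 < x) (hy : 0 < y) :
    Real.log x ≤ Real.log y + (x - y) / y := by
  have h := Real.log_le_sub_one_of_pos (div_pos hx hy)
  rw [Real.log_div hx.ne' hy.ne', div_sub_one hy.ne'] at h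
  linarith

section EuclideanNorm

variable {ι : Type*} [Fintype ι]

lemma dotProduct_self_eq_sum_sq (v : ι → ℝ) : v ⬝ᵥ v = ∑ i, v i ^ 2 := by
  simp only [dotProduct, sq]

lemma dotProduct_le_eucNorm_mul_eucNorm (u v : ι → ℝ) : u ⬝ᵥ v ≤ eucNorm u * eucNorm v := by
  simpa only [eucNorm, dotProduct, sq] using Real.sum_mul_le_sqrt_mul_sqrt univ u v

lemma le_eucNorm (v : ι → ℝ) (i : ι) : v i ≤ eucNorm v :=
  calc v i ≤ |v i| := le_abs_self _
    _ = √(v i ^ 2) := (Real.sqrt_sq_eq_abs _).symm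
    _ ≤ eucNorm v := by
      rw [eucNorm, dotProduct_self_eq_sum_sq]
      exact Real.sqrt_le_sqrt (single_le_sum (fun j _ => sq_nonneg (v j)) (mem_univ i))

lemma eucNorm_nonneg (v : ι → ℝ) : 0 ≤ eucNorm v := Real.sqrt_nonneg _

lemma sq_eucNorm (v : ι → ℝ) : eucNorm v ^ 2 = ∑ i, v i ^ 2 := by
  rw [eucNorm, dotProduct_self_eq_sum_sq, Real.sq_sqrt (sum_nonneg fun i _ => sq_nonneg (v i))]

end EuclideanNorm

lemma Matrix.isUnit_of_rank_eq_card {K κ : Type*} [Field K] [Fintype κ] [DecidableEq κ]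
    {M : Matrix κ κ K} (h : M.rank = Fintype.card κ) : IsUnit M := by
  rw [← linearIndependent_rows_iff_isUnit, linearIndependent_iff_card_eq_finrank_span,
    Set.finrank, ← rank_eq_finrank_span_row, h]

/-- With `aᵢ = (t'ᵢ - tᵢ)/tᵢ` and `r = ‖a‖`, `horth` gives `∑ aᵢ² tᵢ/t'ᵢ = ∑ aᵢ ≤ η r`, while
`tᵢ/t'ᵢ = 1/(1 + aᵢ) ≥ 1/(1 + r)`; hence `r² ≤ η r (1 + r)`, i.e. `1 + r ≤ 1/(1 - η)`. -/
lemma le_div_one_sub_of_sum_le {ι : Type*} [Fintype ι] {t t' : ι → ℝ} (ht : ∀ i, 0 < t i)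
    (ht' : ∀ i, 0 < t' i) {η : ℝ} (hη₀ : 0 ≤ η) (hη₁ : η < 1)
    (horth : ∑ i, (t' i - t i) / t' i = 0)
    (hsum : ∑ i, (t' i - t i) / t i ≤ η * eucNorm (fun i => (t' i - t i) / t i)) (i : ι) :
    t' i ≤ t i / (1 - η) := by
  set a : ι → ℝ := fun i => (t' i - t i) / t i
  set r := eucNorm a
  have hr : 0 ≤ r := eucNorm_nonneg a
  have hratio : ∀ i, t' i = t i * (1 + a i) := fun i => by
    have := (ht i).ne'
    simp only [a]; field_simp; ring
  have hterm : ∀ i, a i ^ 2 / (1 + r) ≤ a i ^ 2 * (t i / t' i) := fun i => by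
    rw [div_eq_mul_inv]
    gcongr
    rw [inv_le_comm₀ (by linarith) (div_pos (ht i) (ht' i)), inv_div, hratio,
      mul_div_cancel_left₀ _ (ht i).ne']
    linarith [le_eucNorm a i]
  have hquot : ∀ i, a i ^ 2 * (t i / t' i) = a i - (t' i - t i) / t' i := fun i => by
    have := (ht i).ne'
    have := (ht' i).ne'
    simp only [a]; field_simp
  have hsq : r ^ 2 / (1 + r) ≤ η * r := calc
    r ^ 2 / (1 + r) = ∑ i, a i ^ 2 / (1 + r) := by rw [sq_eucNorm, sum_div]
    _ ≤ ∑ i, a i ^ 2 * (t i / t' i) := sum_le_sum fun i _ => hterm i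
    _ = ∑ i, a i := by simp only [hquot, sum_sub_distrib, horth, sub_zero]
    _ ≤ η * r := hsum
  have hr' : r ≤ η * (1 + r) := by
    rw [div_le_iff₀ (by linarith)] at hsq
    nlinarith [mul_nonneg hη₀ (by linarith : (0 : ℝ) ≤ 1 + r)]
  have hscale : (1 + a i) * (1 - η) ≤ 1 := by nlinarith [le_eucNorm a i]
  rw [hratio, le_div_iff₀ (by linarith), mul_assoc]
  exact mul_le_of_le_one_right (ht i).le hscale

section Projection

variable {κ ι : Type*} [Fintype κ] [Fintype ι] [DecidableEq κ] [DecidableEq ι]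

lemma diagInv_transpose (t : ι → ℝ) : (diagInv t)ᵀ = diagInv t := diagonal_transpose _

lemma diagInv_mulVec_apply (t v : ι → ℝ) (i : ι) : (diagInv t *ᵥ v) i = v i / t i := by
  rw [diagInv, mulVec_diagonal, inv_mul_eq_div]

lemma isUnit_gram_diagInv {B : Matrix κ ι ℝ} (hB : B.rank = Fintype.card κ) {t : ι → ℝ}
    (ht : ∀ i, t i ≠ 0) : IsUnit (B * diagInv t * diagInv t * Bᵀ) := by
  have hT : IsUnit (diagInv t).det := by
    rw [diagInv, det_diagonal, isUnit_iff_ne_zero]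
    exact prod_ne_zero_iff.2 fun i _ => inv_ne_zero (ht i)
  have hgram : B * diagInv t * diagInv t * Bᵀ = (B * diagInv t) * (B * diagInv t)ᵀ := by
    rw [transpose_mul, diagInv_transpose, Matrix.mul_assoc (B * diagInv t)]
  apply isUnit_of_rank_eq_card
  rw [hgram, rank_self_mul_transpose, rank_mul_eq_left_of_isUnit_det _ _ hT, hB]

lemma sum_le_etaA_mul_eucNorm {B : Matrix κ ι ℝ} (hB : B.rank = Fintype.card κ) {t : ι → ℝ}
    (ht : ∀ i, t i ≠ 0) (q : κ → ℝ) :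
    ∑ i, (diagInv t *ᵥ (Bᵀ *ᵥ q)) i ≤ etaA B t * eucNorm (diagInv t *ᵥ (Bᵀ *ᵥ q)) := by
  set T := diagInv t
  set N := B * T * T * Bᵀ
  set P := T * Bᵀ * N⁻¹ * B * T
  have hT : Tᵀ = T := diagInv_transpose t
  have hN : IsUnit N.det := (isUnit_iff_isUnit_det N).1 (isUnit_gram_diagInv hB ht)
  have hPsymm : Pᵀ = P := by
    have hNsymm : Nᵀ = N := by
      simp only [N, transpose_mul, transpose_transpose, hT, Matrix.mul_assoc]
    simp only [P, transpose_mul, transpose_transpose, hT, transpose_nonsing_inv, hNsymm,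
      Matrix.mul_assoc]
  have hPfix : P * (T * Bᵀ) = T * Bᵀ := by
    calc P * (T * Bᵀ) = T * Bᵀ * (N⁻¹ * N) := by simp only [P, N, Matrix.mul_assoc]
      _ = T * Bᵀ := by rw [nonsing_inv_mul _ hN, Matrix.mul_one]
  set a := T *ᵥ (Bᵀ *ᵥ q)
  have hPa : P *ᵥ a = a := by simp only [a, mulVec_mulVec, hPfix]
  calc ∑ i, a i = (fun _ => 1) ⬝ᵥ (P *ᵥ a) := by rw [hPa]; simp only [dotProduct, one_mul]
    _ = (P *ᵥ fun _ => 1) ⬝ᵥ a := by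
      rw [dotProduct_mulVec, ← mulVec_transpose, hPsymm]
    _ ≤ etaA B t * eucNorm a := dotProduct_le_eucNorm_mul_eucNorm _ _

theorem le_div_one_sub_etaA {B : Matrix κ ι ℝ} (hB : B.rank = Fintype.card κ) {t t' : ι → ℝ}
    (ht : ∀ i, 0 < t i) (ht' : ∀ i, 0 < t' i) {q : κ → ℝ} (hq : t' - t = Bᵀ *ᵥ q)
    (hcenter : B *ᵥ t'⁻¹ = 0) (hη : etaA B t < 1) (i : ι) :
    t' i ≤ t i / (1 - etaA B t) := by
  have hdiag : diagInv t *ᵥ (Bᵀ *ᵥ q) = fun i => (t' i - t i) / t i := by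
    ext i; rw [diagInv_mulVec_apply, ← hq, Pi.sub_apply]
  refine le_div_one_sub_of_sum_le (η := etaA B t) ht ht' (eucNorm_nonneg _) hη ?_ ?_ i
  · calc ∑ i, (t' i - t i) / t' i = (t' - t) ⬝ᵥ t'⁻¹ := by
          simp only [dotProduct, Pi.sub_apply, Pi.inv_apply, div_eq_mul_inv]
      _ = 0 := by rw [hq, mulVec_transpose, ← dotProduct_mulVec, hcenter, dotProduct_zero]
  · simpa only [hdiag] using sum_le_etaA_mul_eucNorm hB (fun i => (ht i).ne') q

end Projection

lemma fromCols_mulVec_sumElim_inv_eq_zero {κ ι : Type*} [Fintype ι] {A : Matrix κ ι ℝ}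
    {b : κ → ℝ} {s : ι → ℝ} {sgap : ℝ}
    (hcenter : A *ᵥ s⁻¹ = ((Fintype.card ι : ℝ) / sgap) • b) :
    fromCols A (of fun i (_ : ι) => -b i) *ᵥ (Sum.elim s fun _ => sgap)⁻¹ = 0 := by
  rw [← Sum.elim_inv_inv, fromCols_mulVec_sumElim, hcenter]
  ext i
  simp only [Pi.add_apply, Pi.smul_apply, smul_eq_mul, mulVec, dotProduct, of_apply, Pi.inv_apply,
    neg_mul, sum_neg_distrib, sum_const, card_univ, nsmul_eq_mul, Pi.zero_apply]
  ring

section DualSlacks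

variable {κ ι : Type*} [Fintype κ] {A : Matrix κ ι ℝ} {b : κ → ℝ} {c : ι → ℝ}
  {y y' : κ → ℝ} {s s' : ι → ℝ}

lemma sub_eq_transpose_mulVec_sub (hfeas : Aᵀ *ᵥ y + s = c) (hfeas' : Aᵀ *ᵥ y' + s' = c) :
    s' - s = Aᵀ *ᵥ (y - y') := by
  rw [mulVec_sub, eq_sub_of_add_eq' hfeas, eq_sub_of_add_eq' hfeas']
  abel

lemma sumElim_sub_sumElim_eq_transpose_mulVec {z sgap sgap' : ℝ}
    (hfeas : Aᵀ *ᵥ y + s = c) (hgap : b ⬝ᵥ y - z = sgap)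
    (hfeas' : Aᵀ *ᵥ y' + s' = c) (hgap' : b ⬝ᵥ y' - z = sgap') :
    (Sum.elim s' fun _ => sgap') - (Sum.elim s fun _ => sgap) =
      (fromCols A (of fun i (_ : ι) => -b i))ᵀ *ᵥ (y - y') := by
  rw [transpose_fromCols, fromRows_mulVec]
  ext (j | j)
  · exact congrFun (sub_eq_transpose_mulVec_sub hfeas hfeas') j
  · rw [← hgap, ← hgap']
    simp only [dotProduct, Pi.sub_apply, Sum.elim_inr, mulVec, transpose_apply, of_apply, mul_sub,
      sum_sub_distrib, neg_mul, sum_neg_distrib]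
    ring

variable [Fintype ι]

theorem potential_le_sub_of_center {z z' sgap sgap' : ℝ}
    (hfeas : Aᵀ *ᵥ y + s = c) (hgap : b ⬝ᵥ y - z = sgap) (hs : ∀ j, 0 < s j) (hsgap : 0 < sgap)
    (hcenter : A *ᵥ s⁻¹ = ((Fintype.card ι : ℝ) / sgap) • b)
    (hfeas' : Aᵀ *ᵥ y' + s' = c) (hgap' : b ⬝ᵥ y' - z' = sgap') (hs' : ∀ j, 0 < s' j)
    (hsgap' : 0 < sgap') :
    ∑ j, Real.log (s' j) + Fintype.card ι * Real.log sgap' ≤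
      ∑ j, Real.log (s j) + Fintype.card ι * Real.log sgap -
        Fintype.card ι * (z' - z) / sgap := by
  set m : ℝ := (Fintype.card ι : ℝ)
  have hlinear : ∑ j, (s' j - s j) / s j = m / sgap * (sgap - sgap' - (z' - z)) := calc
    ∑ j, (s' j - s j) / s j = (s' - s) ⬝ᵥ s⁻¹ := by
      simp only [dotProduct, Pi.sub_apply, Pi.inv_apply, div_eq_mul_inv]
    _ = (y - y') ⬝ᵥ (A *ᵥ s⁻¹) := by
      rw [sub_eq_transpose_mulVec_sub hfeas hfeas', mulVec_transpose, dotProduct_mulVec]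
    _ = m / sgap * (sgap - sgap' - (z' - z)) := by
      rw [hcenter, dotProduct_smul, smul_eq_mul, sub_dotProduct, dotProduct_comm y,
        dotProduct_comm y', ← hgap, ← hgap']
      ring
  calc ∑ j, Real.log (s' j) + m * Real.log sgap'
      ≤ ∑ j, (Real.log (s j) + (s' j - s j) / s j) +
          m * (Real.log sgap + (sgap' - sgap) / sgap) := by
        gcongr with j
        · exact Real.log_le_log_add_sub_div (hs' j) (hs j)
        · exact Real.log_le_log_add_sub_div hsgap' hsgap
    _ = ∑ j, Real.log (s j) + m * Real.log sgap - m * (z' - z) / sgap := by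
        rw [sum_add_distrib, hlinear]
        field_simp
        ring

end DualSlacks

theorem potential_decrease_general {n m : ℕ} (hm : 1 ≤ m) (A : Matrix (Fin n) (Fin m) ℝ)
    (b : Fin n → ℝ) (c : Fin m → ℝ) (z : ℝ)
    (Atil : Matrix (Fin n) (Fin m ⊕ Fin m) ℝ)
    (hAtil : Atil = Matrix.fromCols A (Matrix.of fun i (_ : Fin m) => -b i))
    (hrank : Atil.rank = n)
    -- the current near-central point of `Ω^D_{b,z}`
    (y : Fin n → ℝ) (s : Fin m → ℝ) (sgap : ℝ)
    (hfeas : Aᵀ *ᵥ y + s = c) (hgap : b ⬝ᵥ y - z = sgap)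
    (hs : ∀ j, 0 < s j) (hsgap : 0 < sgap)
    (hη : etaA Atil (Sum.elim s fun _ => sgap) ≤ 1 / 10)
    -- the shifted bound
    (zplus : ℝ) (hzplus : zplus = z + sgap / (10 * Real.sqrt m))
    -- the analytic center of `Ω^D_{b,z}`
    (ybar : Fin n → ℝ) (sbar : Fin m → ℝ) (sgapbar : ℝ)
    (hbfeas : Aᵀ *ᵥ ybar + sbar = c) (hbgap : b ⬝ᵥ ybar - z = sgapbar)
    (hbs : ∀ j, 0 < sbar j) (hbsgap : 0 < sgapbar)
    (hbcenter : A *ᵥ (fun j => (sbar j)⁻¹) = ((m : ℝ) / sgapbar) • b)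
    -- the analytic center of `Ω^D_{b,z⁺}`
    (ybarp : Fin n → ℝ) (sbarp : Fin m → ℝ) (sgapbarp : ℝ)
    (hpfeas : Aᵀ *ᵥ ybarp + sbarp = c) (hpgap : b ⬝ᵥ ybarp - zplus = sgapbarp)
    (hps : ∀ j, 0 < sbarp j) (hpsgap : 0 < sgapbarp) :
    (∑ j, Real.log (sbarp j)) + m * Real.log sgapbarp ≤
      (∑ j, Real.log (sbar j)) + m * Real.log sgapbar - (9 / 100) * Real.sqrt m := by
  subst hAtil hzplus
  have hcenter : A *ᵥ sbar⁻¹ = ((Fintype.card (Fin m) : ℝ) / sgapbar) • b := by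
    rwa [Fintype.card_fin]
  have hgapbar : sgapbar ≤ 10 / 9 * sgap := by
    have hη₁ : etaA _ (Sum.elim s fun _ => sgap) < 1 := hη.trans_lt (by norm_num)
    have := le_div_one_sub_etaA (hrank.trans (Fintype.card_fin n).symm)
      (Sum.forall.2 ⟨hs, fun _ => hsgap⟩) (Sum.forall.2 ⟨hbs, fun _ => hbsgap⟩)
      (sumElim_sub_sumElim_eq_transpose_mulVec hfeas hgap hbfeas hbgap)
      (fromCols_mulVec_sumElim_inv_eq_zero hcenter) hη₁ (Sum.inr ⟨0, hm⟩)
    rw [Sum.elim_inr, Sum.elim_inr, le_div_iff₀ (by linarith)] at this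
    nlinarith
  have hpot := potential_le_sub_of_center hbfeas hbgap hbs hbsgap hcenter hpfeas hpgap hps hpsgap
  rw [Fintype.card_fin, add_sub_cancel_left] at hpot
  have hsqrt : 0 < Real.sqrt m := Real.sqrt_pos.2 (by exact_mod_cast hm)
  have hdecrease : 9 / 100 * Real.sqrt m ≤ m * (sgap / (10 * Real.sqrt m)) / sgapbar := calc
    9 / 100 * Real.sqrt m ≤ Real.sqrt m * (sgap / sgapbar) / 10 := by
      have : 9 / 10 ≤ sgap / sgapbar := by rw [le_div_iff₀ hbsgap]; linarith
      nlinarith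
    _ = m * (sgap / (10 * Real.sqrt m)) / sgapbar := by
      field_simp
      rw [Real.sq_sqrt (Nat.cast_nonneg m)]
  linarith

/-- **Potential decrease under a shift.** Suppose `(y, s, s_gap)` is a near-central point of
`Ω^D_{b,z}` (with `η_{Ã}((s, s_gap 1)) ≤ 1/10` for `Ã = [A, -b 1ᵀ]` of full row rank), and let
`z⁺ = z + s_gap/(10√m)`. If `(ȳ, s̄, s̄_gap)` and `(ȳ⁺, s̄⁺, s̄⁺_gap)` are the analytic
centers of `Ω^D_{b,z}` and `Ω^D_{b,z⁺}` respectively, then the potential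
`B(z) = ∑ⱼ log s̄ⱼ + m log s̄_gap` decreases by at least `(9/100)√m`. -/
theorem potential_decrease {n m : ℕ} (hm : 1 ≤ m) (A : Matrix (Fin n) (Fin m) ℝ)
    (b : Fin n → ℝ) (c : Fin m → ℝ) (z : ℝ)
    (Atil : Matrix (Fin n) (Fin m ⊕ Fin m) ℝ)
    (hAtil : Atil = Matrix.fromCols A (Matrix.of fun i (_ : Fin m) => -b i))
    (hrank : Atil.rank = n)
    -- the current near-central point of `Ω^D_{b,z}`
    (y : Fin n → ℝ) (s : Fin m → ℝ) (sgap : ℝ)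
    (hfeas : Aᵀ *ᵥ y + s = c) (hgap : b ⬝ᵥ y - z = sgap)
    (hs : ∀ j, 0 < s j) (hsgap : 0 < sgap)
    (hη : etaA Atil (Sum.elim s fun _ => sgap) ≤ 1 / 10)
    -- the shifted bound
    (zplus : ℝ) (hzplus : zplus = z + sgap / (10 * Real.sqrt m))
    -- the analytic center of `Ω^D_{b,z}`
    (ybar : Fin n → ℝ) (sbar : Fin m → ℝ) (sgapbar : ℝ)
    (hbfeas : Aᵀ *ᵥ ybar + sbar = c) (hbgap : b ⬝ᵥ ybar - z = sgapbar)
    (hbs : ∀ j, 0 < sbar j) (hbsgap : 0 < sgapbar)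
    (hbcenter : A *ᵥ (fun j => (sbar j)⁻¹) = ((m : ℝ) / sgapbar) • b)
    -- the analytic center of `Ω^D_{b,z⁺}`
    (ybarp : Fin n → ℝ) (sbarp : Fin m → ℝ) (sgapbarp : ℝ)
    (hpfeas : Aᵀ *ᵥ ybarp + sbarp = c) (hpgap : b ⬝ᵥ ybarp - zplus = sgapbarp)
    (hps : ∀ j, 0 < sbarp j) (hpsgap : 0 < sgapbarp)
    (hpcenter : A *ᵥ (fun j => (sbarp j)⁻¹) = ((m : ℝ) / sgapbarp) • b) :
    (∑ j, Real.log (sbarp j)) + m * Real.log sgapbarp ≤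
      (∑ j, Real.log (sbar j)) + m * Real.log sgapbar - (9 / 100) * Real.sqrt m :=
  potential_decrease_general hm A b c z Atil hAtil hrank y s sgap hfeas hgap hs hsgap hη zplus
    hzplus ybar sbar sgapbar hbfeas hbgap hbs hbsgap hbcenter ybarp sbarp sgapbarp hpfeas hpgap hps
    hpsgap
end

section
/- Let A be an n×m real matrix, s ∈ ℝ^m with all entries positive, S = diag(s), and suppose AS^{-2}Aᵀ is positive definite. Let b, b̂ ∈ ℝⁿ and s_gap, ŝ_gap > 0. Let Â = [A, −b̂·1_mᵀ] and Ã = [A, −b·1_mᵀ], both assumed to have full row rank. Suppose: ŝ_gap ≥ 40·m·‖b̂‖_{(AS^{-2}Aᵀ)^{-1}}, s_gap ≥ 40·m·‖b‖_{(AS^{-2}Aᵀ)^{-1}}, and η_{Â}((s, ŝ_gap·1_m)) ≤ 1/40. Then η_{Ã}((s, s_gap·1_m)) ≤ 1/10. -/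
open Matrix

open Matrix

/-- The matrix norm `‖v‖_M = √(vᵀ M v)`. -/
noncomputable def mnorm {ι : Type*} [Fintype ι] (M : Matrix ι ι ℝ) (v : ι → ℝ) : ℝ :=
  Real.sqrt (v ⬝ᵥ M *ᵥ v)

/-!
Write `M = A S⁻² Aᵀ` and `v = A S⁻¹ 1`. Since `[A, -b 1ᵀ] · diag(s, g 1)⁻¹ = [A S⁻¹, -(b / g) 1ᵀ]`,
its Gram matrix is the rank-one update `M + (m / g²) b bᵀ` of `M` and it maps `1` to
`v - (m / g) b`, so `η = ‖v - (m / g) b‖` in the norm of `(M + (m / g²) b bᵀ)⁻¹`.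
A positive semidefinite update can only shrink the inverse norm, and by Cauchy–Schwarz the
update `(m / ĝ²) b̂ b̂ᵀ` is at most `3 M`, so passing from `(M + (m / ĝ²) b̂ b̂ᵀ)⁻¹` to `M⁻¹` at
most doubles it. The gap conditions give `(m / g) ‖b‖_{M⁻¹} ≤ 1/40`, whence
`η_Ã ≤ ‖v‖_{M⁻¹} + 1/40 ≤ 2 η_Â + 1/40 + 1/40 ≤ 1/10`.
-/

open scoped MatrixOrder

section QuadraticNorm

variable {ι : Type*} [Fintype ι]

lemma eucNorm_eq_norm_toLp (v : ι → ℝ) : eucNorm v = ‖WithLp.toLp 2 v‖ := by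
  simp [eucNorm, EuclideanSpace.norm_eq, dotProduct, sq]

lemma mnorm_transpose_mul_self {κ : Type*} [Fintype κ] (B : Matrix κ ι ℝ) (x : ι → ℝ) :
    mnorm (Bᵀ * B) x = eucNorm (B *ᵥ x) := by
  rw [mnorm, eucNorm, ← mulVec_mulVec, dotProduct_mulVec, vecMul_transpose]

lemma mnorm_nonneg (Q : Matrix ι ι ℝ) (x : ι → ℝ) : 0 ≤ mnorm Q x := Real.sqrt_nonneg _

lemma mnorm_smul_right (Q : Matrix ι ι ℝ) (c : ℝ) (x : ι → ℝ) :
    mnorm Q (c • x) = |c| * mnorm Q x := by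
  rw [mnorm, mnorm, mulVec_smul, dotProduct_smul, smul_dotProduct, smul_smul, smul_eq_mul,
    Real.sqrt_mul (mul_self_nonneg c), Real.sqrt_mul_self_eq_abs]

lemma mnorm_smul_left (Q : Matrix ι ι ℝ) {c : ℝ} (hc : 0 ≤ c) (x : ι → ℝ) :
    mnorm (c • Q) x = √c * mnorm Q x := by
  rw [mnorm, mnorm, smul_mulVec, dotProduct_smul, smul_eq_mul, Real.sqrt_mul hc]

lemma mnorm_sq {Q : Matrix ι ι ℝ} (hQ : Q.PosSemidef) (x : ι → ℝ) :
    mnorm Q x ^ 2 = x ⬝ᵥ Q *ᵥ x :=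
  Real.sq_sqrt (by simpa using hQ.dotProduct_mulVec_nonneg x)

lemma mnorm_mono {P Q : Matrix ι ι ℝ} (h : P ≤ Q) (x : ι → ℝ) : mnorm P x ≤ mnorm Q x := by
  have hx := (Matrix.le_iff.mp h).dotProduct_mulVec_nonneg x
  simp only [star_trivial, sub_mulVec, dotProduct_sub, sub_nonneg] at hx
  exact Real.sqrt_le_sqrt hx

lemma posSemidef_smul_vecMulVec_self (b : ι → ℝ) {c : ℝ} (hc : 0 ≤ c) :
    (c • vecMulVec b b).PosSemidef := by
  simpa using (posSemidef_vecMulVec_self_star b).smul hc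

variable [DecidableEq ι]

lemma Matrix.PosSemidef.exists_eq_transpose_mul_self {Q : Matrix ι ι ℝ} (hQ : Q.PosSemidef) :
    ∃ B : Matrix ι ι ℝ, Q = Bᵀ * B := by
  obtain ⟨B, rfl⟩ := CStarAlgebra.nonneg_iff_eq_star_mul_self.mp hQ.nonneg
  exact ⟨B, by simp [star_eq_conjTranspose]⟩

lemma mnorm_add_le {Q : Matrix ι ι ℝ} (hQ : Q.PosSemidef) (x y : ι → ℝ) :
    mnorm Q (x + y) ≤ mnorm Q x + mnorm Q y := by
  obtain ⟨B, rfl⟩ := hQ.exists_eq_transpose_mul_self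
  simp only [mnorm_transpose_mul_self, eucNorm_eq_norm_toLp, mulVec_add, WithLp.toLp_add]
  exact norm_add_le _ _

lemma mnorm_sub_smul_le {Q : Matrix ι ι ℝ} (hQ : Q.PosSemidef) (x y : ι → ℝ) (c : ℝ) :
    mnorm Q (x - c • y) ≤ mnorm Q x + |c| * mnorm Q y := by
  simpa [sub_eq_add_neg, ← neg_smul, mnorm_smul_right] using mnorm_add_le hQ x ((-c) • y)

lemma mnorm_le_mnorm_sub_smul_add {Q : Matrix ι ι ℝ} (hQ : Q.PosSemidef) (x y : ι → ℝ)
    (c : ℝ) : mnorm Q x ≤ mnorm Q (x - c • y) + |c| * mnorm Q y := by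
  simpa [mnorm_smul_right] using mnorm_add_le hQ (x - c • y) (c • y)

lemma abs_dotProduct_mulVec_le {Q : Matrix ι ι ℝ} (hQ : Q.PosSemidef) (x y : ι → ℝ) :
    |x ⬝ᵥ Q *ᵥ y| ≤ mnorm Q x * mnorm Q y := by
  obtain ⟨B, rfl⟩ := hQ.exists_eq_transpose_mul_self
  rw [mnorm_transpose_mul_self, mnorm_transpose_mul_self, eucNorm_eq_norm_toLp,
    eucNorm_eq_norm_toLp, ← mulVec_mulVec, dotProduct_mulVec, vecMul_transpose]
  simpa [EuclideanSpace.inner_eq_star_dotProduct, dotProduct_comm] using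
    abs_real_inner_le_norm (WithLp.toLp 2 (B *ᵥ x)) (WithLp.toLp 2 (B *ᵥ y))

lemma mnorm_inv_mulVec (M : Matrix ι ι ℝ) (x : ι → ℝ) : mnorm M (M⁻¹ *ᵥ x) = mnorm M⁻¹ x := by
  by_cases hM : IsUnit M.det
  · rw [mnorm, mnorm, mulVec_mulVec, mul_nonsing_inv M hM, one_mulVec, dotProduct_comm]
  · simp [mnorm, nonsing_inv_apply_not_isUnit M hM]

lemma eucNorm_transpose_mulVec_inv_mulVec {κ : Type*} [Fintype κ] (C : Matrix ι κ ℝ)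
    (u : ι → ℝ) : eucNorm (Cᵀ *ᵥ ((C * Cᵀ)⁻¹ *ᵥ u)) = mnorm (C * Cᵀ)⁻¹ u := by
  rw [← mnorm_transpose_mul_self, transpose_transpose, mnorm_inv_mulVec]

lemma abs_dotProduct_le_mnorm_inv_mul_mnorm {M : Matrix ι ι ℝ} (hM : M.PosDef) (b x : ι → ℝ) :
    |b ⬝ᵥ x| ≤ mnorm M⁻¹ b * mnorm M x := by
  have hMT : Mᵀ = M := by rw [← conjTranspose_eq_transpose_of_trivial]; exact hM.isHermitian.eq
  have hb : b ⬝ᵥ x = M⁻¹ *ᵥ b ⬝ᵥ M *ᵥ x := by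
    rw [dotProduct_mulVec, ← mulVec_transpose, hMT, mulVec_mulVec,
      mul_nonsing_inv M hM.det_pos.ne'.isUnit, one_mulVec]
  rw [hb, ← mnorm_inv_mulVec M b]
  exact abs_dotProduct_mulVec_le hM.posSemidef _ _

end QuadraticNorm

section LoewnerOrder

variable {ι : Type*} [Fintype ι] [DecidableEq ι]

lemma two_mul_dotProduct_sub_le {M : Matrix ι ι ℝ} (hM : M.PosDef) (w x : ι → ℝ) :
    2 * (w ⬝ᵥ x) - x ⬝ᵥ M *ᵥ x ≤ w ⬝ᵥ M⁻¹ *ᵥ w := by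
  have hcs := (le_abs_self _).trans (abs_dotProduct_le_mnorm_inv_mul_mnorm hM w x)
  rw [← mnorm_sq hM.inv.posSemidef, ← mnorm_sq hM.posSemidef]
  nlinarith [sq_nonneg (mnorm M⁻¹ w - mnorm M x)]

/-- At `y = N⁻¹ w` we have `wᵀ N⁻¹ w = 2 wᵀy - yᵀ N y`, which only grows when `N` is replaced
by `M ≤ N`, and then is at most `wᵀ M⁻¹ w` by `two_mul_dotProduct_sub_le`. -/
lemma Matrix.PosDef.inv_le_inv {M N : Matrix ι ι ℝ} (hM : M.PosDef) (h : M ≤ N) :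
    N⁻¹ ≤ M⁻¹ := by
  have hN : N.PosDef := by simpa using hM.add_posSemidef (Matrix.le_iff.mp h)
  refine Matrix.le_iff.mpr
    (.of_dotProduct_mulVec_nonneg (hM.inv.isHermitian.sub hN.inv.isHermitian) fun w => ?_)
  set y := N⁻¹ *ᵥ w
  have hNy : N *ᵥ y = w := by
    rw [mulVec_mulVec, mul_nonsing_inv N hN.det_pos.ne'.isUnit, one_mulVec]
  have hyNy : y ⬝ᵥ N *ᵥ y = w ⬝ᵥ N⁻¹ *ᵥ w := by rw [hNy, dotProduct_comm]
  have hMN := (Matrix.le_iff.mp h).dotProduct_mulVec_nonneg y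
  have hvar := two_mul_dotProduct_sub_le hM w y
  simp only [star_trivial, sub_mulVec, dotProduct_sub] at hMN ⊢
  linarith

lemma mnorm_inv_le_sqrt_mul_mnorm_inv {M N : Matrix ι ι ℝ} (hM : M.PosDef) (hN : N.PosDef)
    {c : ℝ} (hc : 0 < c) (h : N ≤ c • M) (x : ι → ℝ) : mnorm M⁻¹ x ≤ √c * mnorm N⁻¹ x := by
  have hle := mnorm_mono (hN.inv_le_inv h) x
  have : Invertible c := invertibleOfNonzero hc.ne'
  rwa [Matrix.inv_smul (k := c) (A := M) hM.det_pos.ne'.isUnit, invOf_eq_inv,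
    mnorm_smul_left _ (inv_nonneg.mpr hc.le), Real.sqrt_inv,
    inv_mul_le_iff₀ (Real.sqrt_pos.mpr hc)] at hle

lemma vecMulVec_self_le_mnorm_inv_sq_smul {M : Matrix ι ι ℝ} (hM : M.PosDef) (b : ι → ℝ) :
    vecMulVec b b ≤ (mnorm M⁻¹ b ^ 2) • M := by
  refine Matrix.le_iff.mpr (.of_dotProduct_mulVec_nonneg ?_ fun x => ?_)
  · exact (hM.posSemidef.smul (sq_nonneg _)).isHermitian.sub
      (by simpa using (posSemidef_smul_vecMulVec_self b zero_le_one).isHermitian)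
  · have hbx := abs_dotProduct_le_mnorm_inv_mul_mnorm hM b x
    simp only [star_trivial, sub_mulVec, dotProduct_sub, smul_mulVec, dotProduct_smul,
      smul_eq_mul, vecMulVec_mulVec, op_smul_eq_smul, ← mnorm_sq hM.posSemidef]
    rw [dotProduct_comm x b, sub_nonneg, ← mul_pow, ← sq, ← sq_abs]
    exact pow_le_pow_left₀ (abs_nonneg _) hbx 2

variable {M : Matrix ι ι ℝ} (hM : M.PosDef) (b : ι → ℝ) {c : ℝ} (hc : 0 ≤ c)
include hM hc

lemma mnorm_inv_add_smul_vecMulVec_le (x : ι → ℝ) :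
    mnorm (M + c • vecMulVec b b)⁻¹ x ≤ mnorm M⁻¹ x :=
  mnorm_mono (hM.inv_le_inv (le_add_of_nonneg_right
    (posSemidef_smul_vecMulVec_self b hc).nonneg)) x

lemma add_smul_vecMulVec_le {δ : ℝ} (hδ : c * mnorm M⁻¹ b ^ 2 ≤ δ) :
    M + c • vecMulVec b b ≤ (1 + δ) • M := by
  rw [Matrix.le_iff, show (1 + δ) • M - (M + c • vecMulVec b b) =
      (δ - c * mnorm M⁻¹ b ^ 2) • M + c • (mnorm M⁻¹ b ^ 2 • M - vecMulVec b b) by module]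
  exact (hM.posSemidef.smul (sub_nonneg.mpr hδ)).add
    ((Matrix.le_iff.mp (vecMulVec_self_le_mnorm_inv_sq_smul hM b)).smul hc)

lemma mnorm_inv_le_sqrt_mul_mnorm_inv_add_smul_vecMulVec {δ : ℝ}
    (hδ : c * mnorm M⁻¹ b ^ 2 ≤ δ) (x : ι → ℝ) :
    mnorm M⁻¹ x ≤ √(1 + δ) * mnorm (M + c • vecMulVec b b)⁻¹ x := by
  have hδ0 : 0 ≤ δ := (by positivity : 0 ≤ c * mnorm M⁻¹ b ^ 2).trans hδ
  exact mnorm_inv_le_sqrt_mul_mnorm_inv hM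
    (hM.add_posSemidef (posSemidef_smul_vecMulVec_self b hc)) (by linarith)
    (add_smul_vecMulVec_le hM b hc hδ) x

end LoewnerOrder

section CentralPathNorm

variable {κ ι : Type*} [Fintype ι] [DecidableEq ι]

lemma mul_diagInv_mul_diagInv_mul_transpose (B : Matrix κ ι ℝ) (t : ι → ℝ) :
    B * diagInv t * diagInv t * Bᵀ = (B * diagInv t) * (B * diagInv t)ᵀ := by
  rw [transpose_mul, diagInv, diagonal_transpose, Matrix.mul_assoc _ _ Bᵀ]

lemma etaA_eq_mnorm [Fintype κ] [DecidableEq κ] (B : Matrix κ ι ℝ) (t : ι → ℝ) :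
    etaA B t = mnorm (B * diagInv t * diagInv t * Bᵀ)⁻¹ ((B * diagInv t) *ᵥ fun _ => 1) := by
  rw [etaA, mul_diagInv_mul_diagInv_mul_transpose, ← eucNorm_transpose_mulVec_inv_mulVec,
    transpose_mul, diagInv, diagonal_transpose]
  simp only [mulVec_mulVec, Matrix.mul_assoc]

lemma fromCols_mul_diagInv_sumElim {ι' : Type*} [Fintype ι'] [DecidableEq ι']
    (A : Matrix κ ι ℝ) (R : Matrix κ ι' ℝ) (s : ι → ℝ) (t : ι' → ℝ) :
    fromCols A R * diagInv (Sum.elim s t) = fromCols (A * diagInv s) (R * diagInv t) := by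
  have hD : diagInv (Sum.elim s t) = fromBlocks (diagInv s) 0 0 (diagInv t) := by
    rw [diagInv, diagInv, diagInv, fromBlocks_diagonal]
    congr 1
    ext (i | i) <;> rfl
  rw [hD, fromCols_mul_fromBlocks, Matrix.mul_zero, Matrix.mul_zero, add_zero, zero_add]

lemma etaA_fromCols_eq [Fintype κ] [DecidableEq κ] {m : ℕ} (A : Matrix κ (Fin m) ℝ)
    (s : Fin m → ℝ) (b : κ → ℝ) (g : ℝ) :
    etaA (fromCols A (of fun i (_ : Fin m) => -b i)) (Sum.elim s fun _ => g) =
      mnorm (A * diagInv s * diagInv s * Aᵀ + ((m : ℝ) / g ^ 2) • vecMulVec b b)⁻¹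
        ((A * diagInv s) *ᵥ (fun _ => 1) - ((m : ℝ) / g) • b) := by
  set R : Matrix κ (Fin m) ℝ := of fun i _ => -(b i / g)
  have hR : (of fun i (_ : Fin m) => -b i) * diagInv (fun _ : Fin m => g) = R := by
    ext i j
    simp [R, diagInv, div_eq_mul_inv]
  have hRR : R * Rᵀ = ((m : ℝ) / g ^ 2) • vecMulVec b b := by
    ext i j
    simp [R, mul_apply, vecMulVec_apply]
    ring
  have hR1 : R *ᵥ (fun _ => 1) = -(((m : ℝ) / g) • b) := by
    ext i
    simp [R, mulVec, dotProduct]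
    ring
  rw [etaA_eq_mnorm, mul_diagInv_mul_diagInv_mul_transpose, fromCols_mul_diagInv_sumElim, hR,
    transpose_fromCols, fromCols_mul_fromRows, hRR, ← mul_diagInv_mul_diagInv_mul_transpose,
    show (fun _ : Fin m ⊕ Fin m => (1 : ℝ)) = Sum.elim (fun _ => 1) (fun _ => 1) from
      (Sum.elim_const_const 1).symm, fromCols_mulVec_sumElim, hR1, sub_eq_add_neg]

end CentralPathNorm

lemma abs_div_mul_le_one_div_of_mul_le {k m β g : ℝ} (hk : 0 < k) (hm : 0 ≤ m) (hβ : 0 ≤ β)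
    (h : k * m * β ≤ g) : |m / g| * β ≤ 1 / k := by
  rcases (mul_nonneg (mul_nonneg hk.le hm) hβ |>.trans h).eq_or_lt with hg | hg
  · simp [← hg, hk.le]
  · rw [abs_of_nonneg (by positivity), div_mul_eq_mul_div, div_le_div_iff₀ hg hk]
    linarith

lemma natCast_div_sq_mul_sq_le (m : ℕ) (g β : ℝ) : m / g ^ 2 * β ^ 2 ≤ (|m / g| * β) ^ 2 := by
  rw [mul_pow, sq_abs, div_pow]
  gcongr
  exact_mod_cast Nat.le_self_pow two_ne_zero m

theorem switch_central_path_general {n m : ℕ} (A : Matrix (Fin n) (Fin m) ℝ)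
    (s : Fin m → ℝ)
    (hPD : (A * diagInv s * diagInv s * Aᵀ).PosDef)
    (b bhat : Fin n → ℝ) (sgap sgaphat : ℝ)
    (Ahat : Matrix (Fin n) (Fin m ⊕ Fin m) ℝ)
    (hAhat : Ahat = Matrix.fromCols A (Matrix.of fun i (_ : Fin m) => -bhat i))
    (Atil : Matrix (Fin n) (Fin m ⊕ Fin m) ℝ)
    (hAtil : Atil = Matrix.fromCols A (Matrix.of fun i (_ : Fin m) => -b i))
    (h1 : 40 * m * mnorm (A * diagInv s * diagInv s * Aᵀ)⁻¹ bhat ≤ sgaphat)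
    (h2 : 40 * m * mnorm (A * diagInv s * diagInv s * Aᵀ)⁻¹ b ≤ sgap)
    (hη : etaA Ahat (Sum.elim s fun _ => sgaphat) ≤ 1 / 40) :
    etaA Atil (Sum.elim s fun _ => sgap) ≤ 1 / 10 := by
  rw [hAtil, etaA_fromCols_eq]
  rw [hAhat, etaA_fromCols_eq] at hη
  set M := A * diagInv s * diagInv s * Aᵀ
  set v := (A * diagInv s) *ᵥ fun _ => (1 : ℝ)
  have hMinv := hPD.inv.posSemidef
  have hb := abs_div_mul_le_one_div_of_mul_le (by norm_num) (Nat.cast_nonneg m)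
    (mnorm_nonneg _ _) h2
  have hbhat := abs_div_mul_le_one_div_of_mul_le (by norm_num) (Nat.cast_nonneg m)
    (mnorm_nonneg _ _) h1
  have hwhat : mnorm M⁻¹ (v - ((m : ℝ) / sgaphat) • bhat) ≤ 1 / 20 := by
    have hδ : (m : ℝ) / sgaphat ^ 2 * mnorm M⁻¹ bhat ^ 2 ≤ 3 :=
      (natCast_div_sq_mul_sq_le m sgaphat _).trans
        (by nlinarith [mul_nonneg (abs_nonneg ((m : ℝ) / sgaphat)) (mnorm_nonneg M⁻¹ bhat)])
    have hcmp := mnorm_inv_le_sqrt_mul_mnorm_inv_add_smul_vecMulVec hPD bhat (by positivity) hδ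
      (v - ((m : ℝ) / sgaphat) • bhat)
    rw [show √(1 + 3 : ℝ) = 2 by norm_num] at hcmp
    linarith
  calc _ ≤ mnorm M⁻¹ (v - ((m : ℝ) / sgap) • b) :=
        mnorm_inv_add_smul_vecMulVec_le hPD b (by positivity) _
    _ ≤ mnorm M⁻¹ v + |(m : ℝ) / sgap| * mnorm M⁻¹ b := mnorm_sub_smul_le hMinv _ _ _
    _ ≤ mnorm M⁻¹ (v - ((m : ℝ) / sgaphat) • bhat) + |(m : ℝ) / sgaphat| * mnorm M⁻¹ bhat
        + |(m : ℝ) / sgap| * mnorm M⁻¹ b := by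
      gcongr
      exact mnorm_le_mnorm_sub_smul_add hMinv _ _ _
    _ ≤ 1 / 10 := by linarith

/-- **Switching from the auxiliary to the true central path.** If `A S⁻² Aᵀ` is positive
definite, `ŝ_gap ≥ 40 m ‖b̂‖_{(A S⁻² Aᵀ)⁻¹}`, `s_gap ≥ 40 m ‖b‖_{(A S⁻² Aᵀ)⁻¹}` and
`η_{Â}((s, ŝ_gap 1)) ≤ 1/40` for `Â = [A, -b̂ 1ᵀ]`, then
`η_{Ã}((s, s_gap 1)) ≤ 1/10` for `Ã = [A, -b 1ᵀ]`. -/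
theorem switch_central_path {n m : ℕ} (A : Matrix (Fin n) (Fin m) ℝ)
    (s : Fin m → ℝ) (hs : ∀ i, 0 < s i)
    (hPD : (A * diagInv s * diagInv s * Aᵀ).PosDef)
    (b bhat : Fin n → ℝ) (sgap sgaphat : ℝ) (hsgap : 0 < sgap) (hsgaphat : 0 < sgaphat)
    (Ahat : Matrix (Fin n) (Fin m ⊕ Fin m) ℝ)
    (hAhat : Ahat = Matrix.fromCols A (Matrix.of fun i (_ : Fin m) => -bhat i))
    (Atil : Matrix (Fin n) (Fin m ⊕ Fin m) ℝ)
    (hAtil : Atil = Matrix.fromCols A (Matrix.of fun i (_ : Fin m) => -b i))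
    (hrankhat : Ahat.rank = n) (hranktil : Atil.rank = n)
    (h1 : 40 * m * mnorm (A * diagInv s * diagInv s * Aᵀ)⁻¹ bhat ≤ sgaphat)
    (h2 : 40 * m * mnorm (A * diagInv s * diagInv s * Aᵀ)⁻¹ b ≤ sgap)
    (hη : etaA Ahat (Sum.elim s fun _ => sgaphat) ≤ 1 / 40) :
    etaA Atil (Sum.elim s fun _ => sgap) ≤ 1 / 10 :=
  switch_central_path_general A s hPD b bhat sgap sgaphat Ahat hAhat Atil hAtil h1 h2 hη
end
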